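/- Let (X_n, A_n, μ_n)_{n∈ℕ} be a family of probability spaces and consider the constant Markov kernels κ_n := const(μ_{n+1}) from ∏_{i≤n} X_i to X_{n+1}. Then for all a, b ∈ ℕ, the partial-trajectory kernel η_{a,b} built from these constant kernels equals the pushforward under the canonical map (∏_{i≤a} X_i) × (∏_{a<i≤b} X_i) → ∏_{i≤b} X_i of the product of the identity kernel on ∏_{i≤a} X_i with the constant kernel equal to the product measure ⊗_{a<i≤b} μ_i. -/

import Mathlib

open MeasureTheory hiding partialTraj_const
open ProbabilityTheory Preorder Filter
open scoped ENNReal ProbabilityTheory Topology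

variable {X : ℕ → Type*} [∀ n, MeasurableSpace (X n)]

/-- Canonical map gluing a trajectory up to time `b` with a point of `X (b + 1)` into a
trajectory up to time `b + 1`. -/
def IicProdSucc (b : ℕ) (p : (Π i : Finset.Iic b, X i) × X (b + 1)) :
    Π i : Finset.Iic (b + 1), X i :=
  fun i ↦ if h : i.1 ≤ b then p.1 ⟨i.1, Finset.mem_Iic.2 h⟩
    else cast (congrArg X (Nat.le_antisymm (Finset.mem_Iic.1 i.2)
      (Nat.lt_of_not_le h))).symm p.2

/-- The partial trajectory kernel `η_{a,b}` built from the kernels `κ n`: for `b ≤ a` it is the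
deterministic kernel given by the restriction map, and `η_{a,b+1}` is obtained from `η_{a,b}` by
composing with the product of the identity kernel and `κ b`. -/
noncomputable def partialTraj (κ : ∀ n, Kernel (Π i : Finset.Iic n, X i) (X (n + 1))) (a : ℕ) :
    (b : ℕ) → Kernel (Π i : Finset.Iic a, X i) (Π i : Finset.Iic b, X i)
  | 0 => Kernel.deterministic (frestrictLe₂ (Nat.zero_le a)) (measurable_frestrictLe₂ _)
  | b + 1 =>
    if h : b + 1 ≤ a then Kernel.deterministic (frestrictLe₂ h) (measurable_frestrictLe₂ h)
    else ((Kernel.id ×ₖ κ b) ∘ₖ partialTraj κ a b).map (IicProdSucc b)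

/-- Canonical map gluing a trajectory on the coordinates in `[0, a]` with one on the
coordinates in `(a, b]` to get a trajectory on the coordinates in `[0, b]`. -/
def IicProdIoc' (a b : ℕ)
    (p : (Π i : Finset.Iic a, X i) × (Π i : Finset.Ioc a b, X i)) :
    Π i : Finset.Iic b, X i :=
  fun i ↦ if h : i.1 ≤ a then p.1 ⟨i.1, Finset.mem_Iic.2 h⟩
    else p.2 ⟨i.1, Finset.mem_Ioc.2 ⟨Nat.lt_of_not_le h, Finset.mem_Iic.1 i.2⟩⟩

/-! Viewing the new coordinate `X (b + 1)` as a trajectory on `Ioc b (b + 1)` through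
`MeasurableEquiv.piSingleton`, the recursion defining `partialTraj` becomes the one defining
Mathlib's `Kernel.partialTraj`, so the two kernels agree for every family `κ`. For constant kernels
the identity is then Mathlib's `MeasureTheory.partialTraj_const`, whose gluing map `IicProdIoc` is
definitionally `IicProdIoc'`. -/

lemma IicProdSucc_eq_IicProdIoc_comp (b : ℕ) :
    IicProdSucc (X := X) b =
      IicProdIoc b (b + 1) ∘ Prod.map id (MeasurableEquiv.piSingleton b) := by
  ext p ⟨i, hi⟩
  by_cases h : i ≤ b
  · simp [IicProdSucc, IicProdIoc, h]
  · obtain rfl : i = b + 1 := by grind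
    simp [IicProdSucc, IicProdIoc, MeasurableEquiv.piSingleton]

theorem partialTraj_eq_kernel_partialTraj
    (κ : ∀ n, Kernel (Π i : Finset.Iic n, X i) (X (n + 1))) [∀ n, IsSFiniteKernel (κ n)]
    (a b : ℕ) : partialTraj κ a b = Kernel.partialTraj κ a b := by
  induction b with
  | zero => rw [partialTraj, Kernel.partialTraj_zero]
  | succ b ih =>
    rw [partialTraj]
    split_ifs with hba
    · rw [Kernel.partialTraj_le hba]
    · rw [Kernel.partialTraj_succ_of_le (by omega), ih, ← Kernel.map_id Kernel.id,
        Kernel.map_prod_map _ _ measurable_id (by fun_prop), Kernel.map_comp, Kernel.map_comp,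
        ← Kernel.map_comp_right _ (by fun_prop) measurable_IicProdIoc,
        IicProdSucc_eq_IicProdIoc_comp, Kernel.map_id]

/-- The partial trajectory kernel associated with the constant kernels `κ_n = const (μ (n+1))`
is the pushforward, under the canonical gluing map, of the product of the identity kernel
with the constant kernel given by the product measure `⊗_{a < i ≤ b} μ i`. -/
theorem partialTraj_const (μ : ∀ n, Measure (X n)) [∀ n, IsProbabilityMeasure (μ n)]
    (a b : ℕ) :
    partialTraj (fun n ↦ Kernel.const (Π i : Finset.Iic n, X i) (μ (n + 1))) a b =
      (Kernel.id ×ₖ Kernel.const (Π i : Finset.Iic a, X i)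
          (Measure.pi (fun i : Finset.Ioc a b ↦ μ i))).map (IicProdIoc' a b) := by
  rw [partialTraj_eq_kernel_partialTraj]
  exact MeasureTheory.partialTraj_const μ
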